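/- Let q > 1 be an integer and let Fr act on the formal power series ring ℂ⟦X₁,…,X_j⟧ in a way compatible with the multiplication-by-q map on the formal torus, i.e. Fr(X_i) = (1+X_i)^q − 1 for each i. Then the quotient ring ℂ⟦X₁,…,X_j⟧/(X_i − Fr(X_i) : 1 ≤ i ≤ j) is a finite-dimensional ℂ-vector space. -/

import Mathlib

/-!
Writing `μ = 1 + X`, the generator `X - ((1 + X) ^ q - 1)` equals `(1 - ∑_{k<q} μ ^ k) * X`, and the
first factor has constant coefficient `1 - q ≠ 0`, so it is a unit. Hence the ideal contains every
variable, so it contains every power series with zero constant coefficient, and the quotient is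
spanned by the image of `ℂ`.
-/

open Finset

theorem sub_one_add_pow_sub_one_eq_mul {A : Type*} [CommRing A] (x : A) (q : ℕ) :
    x - ((1 + x) ^ q - 1) = (1 - ∑ k ∈ range q, (1 + x) ^ k) * x := by
  have h := geom_sum_mul (1 + x) q
  rw [add_sub_cancel_left] at h
  rw [← h]
  ring

namespace MvPowerSeries

variable {σ R : Type*} [CommRing R]

/-- The induction peels off one variable `a` at a time: the part of `f` whose monomials involve `a`
is divisible by `X a`, and the rest satisfies the hypothesis for the smaller set. -/
theorem mem_span_X_image_of_coeff_eq_zero (s : Finset σ) {f : MvPowerSeries σ R}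
    (hf : ∀ m : σ →₀ ℕ, (∀ i ∈ s, m i = 0) → coeff m f = 0) :
    f ∈ Ideal.span (X '' (s : Set σ)) := by
  classical
  induction s using Finset.induction_on generalizing f with
  | empty =>
    have hf0 : f = 0 := by
      ext m
      simpa using hf m
    simp [hf0]
  | insert a s ha ih =>
    let g : MvPowerSeries σ R := fun m => if m a = 0 then coeff m f else 0
    have hg_coeff (m : σ →₀ ℕ) : coeff m g = if m a = 0 then coeff m f else 0 := rfl
    have hg : g ∈ Ideal.span (X '' (s : Set σ)) := ih fun m hm => by
      by_cases hma : m a = 0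
      · rw [hg_coeff, if_pos hma]
        exact hf m (by simpa [hma] using hm)
      · rw [hg_coeff, if_neg hma]
    have hfg : X a ∣ f - g := X_dvd_iff.mpr fun m hm => by
      rw [map_sub, hg_coeff, if_pos hm, sub_self]
    have hspan : Ideal.span (X '' (s : Set σ)) ≤
        Ideal.span ((X : σ → MvPowerSeries σ R) '' ↑(insert a s)) :=
      Ideal.span_mono (Set.image_mono (by simp))
    rw [← sub_add_cancel f g]
    exact add_mem (Ideal.mem_of_dvd _ hfg (Ideal.subset_span (Set.mem_image_of_mem X (by simp)))) (hspan hg)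

theorem ker_constantCoeff [Finite σ] :
    RingHom.ker (constantCoeff : MvPowerSeries σ R →+* R) = Ideal.span (Set.range X) := by
  have := Fintype.ofFinite σ
  refine le_antisymm (fun f hf => ?_) (Ideal.span_le.mpr ?_)
  · rw [← Set.image_univ, ← Finset.coe_univ]
    refine mem_span_X_image_of_coeff_eq_zero _ fun m hm => ?_
    obtain rfl : m = 0 := Finsupp.ext fun i => hm i (mem_univ i)
    simpa using hf
  · rintro _ ⟨i, rfl⟩
    simp

theorem finite_quotient_of_X_mem [Finite σ] {I : Ideal (MvPowerSeries σ R)} (hI : ∀ i, X i ∈ I) :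
    Module.Finite R (MvPowerSeries σ R ⧸ I) := by
  have hker : RingHom.ker (constantCoeff : MvPowerSeries σ R →+* R) ≤ I := by
    rw [ker_constantCoeff, Ideal.span_le]
    rintro _ ⟨i, rfl⟩
    exact hI i
  refine Module.Finite.of_surjective (Algebra.linearMap R _) fun y => ?_
  obtain ⟨f, rfl⟩ := Ideal.Quotient.mk_surjective y
  refine ⟨constantCoeff f, Ideal.Quotient.eq.mpr (hker ?_)⟩
  simp [algebraMap_apply]

theorem isUnit_one_sub_geom_sum_one_add_X {q : ℕ} (hq : IsUnit (1 - q : R)) (i : σ) :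
    IsUnit (1 - ∑ k ∈ range q, (1 + X i : MvPowerSeries σ R) ^ k) := by
  rw [isUnit_iff_constantCoeff]
  simpa using hq

theorem X_sub_one_add_X_pow_sub_one_dvd_X {q : ℕ} (hq : IsUnit (1 - q : R)) (i : σ) :
    X i - ((1 + X i) ^ q - 1) ∣ (X i : MvPowerSeries σ R) := by
  rw [sub_one_add_pow_sub_one_eq_mul]
  exact (isUnit_one_sub_geom_sum_one_add_X hq i).mul_left_dvd.mpr dvd_rfl

end MvPowerSeries

/-- De Jong's trick, key step: for `q > 1`, the quotient of `ℂ⟦X₁,…,X_j⟧` by the ideal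
generated by `X_i - Fr(X_i)`, where `Fr(X_i) = (1+X_i)^q - 1` is multiplication by `q`
on the formal torus, is a finite-dimensional `ℂ`-vector space. -/
theorem deJong_fixed_points_finite (j q : ℕ) (hq : 1 < q) :
    FiniteDimensional ℂ
      (MvPowerSeries (Fin j) ℂ ⧸
        Ideal.span (Set.range fun i : Fin j =>
          (MvPowerSeries.X i : MvPowerSeries (Fin j) ℂ) -
            ((1 + MvPowerSeries.X i) ^ q - 1))) := by
  have hunit : IsUnit (1 - q : ℂ) := by
    refine isUnit_iff_ne_zero.mpr (sub_ne_zero.mpr ?_)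
    exact_mod_cast hq.ne
  refine MvPowerSeries.finite_quotient_of_X_mem fun i => ?_
  exact Ideal.mem_of_dvd _ (MvPowerSeries.X_sub_one_add_X_pow_sub_one_dvd_X hunit i)
    (Ideal.subset_span ⟨i, rfl⟩)
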